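/- arXiv:1806.05912 — 4 statements merged into one kernel-verified Lean document; each statement's English description precedes it below -/
import Mathlib

section
/- Let φ = diag(E, −E) with E the n×n identity. An element 𝔛 ∈ 𝔲(n,n) (i.e. 𝔛⁺φ + φ𝔛 = 0) satisfies 𝔛² = 0 if and only if there exists a maximal isotropic n-dimensional subspace z ⊆ ℂ^{2n} with Im(𝔛) ⊆ z ⊆ Ker(𝔛). -/
/-!
The form `⟨v, w⟩ = v⁺φw` is `⟪v₁, w₁⟫ - ⟪v₂, w₂⟫` in the two halves `v = (v₁, v₂)` of `ℂⁿ ⊕ ℂⁿ`.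
If `X² = 0` then `⟨Xa, Xb⟩ = -⟨a, X²b⟩ = 0`, so `Im X` is isotropic, i.e. `v₁ ↦ v₂` is a
well-defined partial isometry on it. Extending this to a unitary `U` of `ℂⁿ`, the graph of `U` is
an `n`-dimensional isotropic subspace `z ⊇ Im X`. For `v ∈ z`, the vector `X φ X v` lies in
`Im X ⊆ z`, so `0 = ⟨v, X φ X v⟩ = -(X v)⁺(X v)` and `z ⊆ Ker X`. Conversely `Im X ⊆ Ker X` is
`X² = 0`.
-/

open Matrix
open scoped InnerProductSpace

theorem LinearMap.finrank_graph {R E F : Type*} [Semiring R] [AddCommMonoid E] [Module R E]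
    [AddCommMonoid F] [Module R F] (f : E →ₗ[R] F) :
    Module.finrank R f.graph = Module.finrank R E := by
  rw [f.graph_eq_range_prod]
  exact LinearMap.finrank_range_of_inj fun a b h => congrArg Prod.fst h

section InnerProductSpace

variable {𝕜 E F : Type*} [RCLike 𝕜] [NormedAddCommGroup E] [InnerProductSpace 𝕜 E]
  [NormedAddCommGroup F] [InnerProductSpace 𝕜 F]

theorem LinearIsometry.inner_fst_eq_inner_snd_of_mem_graph (U : E →ₗᵢ[𝕜] F) {a b : E × F}
    (ha : a ∈ U.toLinearMap.graph) (hb : b ∈ U.toLinearMap.graph) : ⟪a.1, b.1⟫_𝕜 = ⟪a.2, b.2⟫_𝕜 := by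
  rw [LinearMap.mem_graph_iff] at ha hb
  rw [ha, hb, LinearIsometry.coe_toLinearMap, U.inner_map_map]

theorem Submodule.exists_linearIsometry_le_graph [FiniteDimensional 𝕜 E] (W : Submodule 𝕜 (E × E))
    (hW : ∀ w ∈ W, ‖w.1‖ = ‖w.2‖) : ∃ U : E →ₗᵢ[𝕜] E, W ≤ U.toLinearMap.graph := by
  have hfun : ∀ w ∈ W, w.1 = 0 → w.2 = 0 := fun w hw h1 => by
    rw [← norm_eq_zero, ← hW w hw, h1, norm_zero]
  let L : W.toLinearPMap.domain →ₗᵢ[𝕜] E :=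
    { toLinearMap := W.toLinearPMap.toFun
      norm_map' := fun x => (hW _ (W.mem_graph_toLinearPMap hfun x)).symm }
  refine ⟨L.extend, fun w hw => ?_⟩
  rw [← W.toLinearPMap_graph_eq hfun, LinearPMap.mem_graph_iff] at hw
  obtain ⟨y, hy₁, hy₂⟩ := hw
  rw [LinearMap.mem_graph_iff, LinearIsometry.coe_toLinearMap, ← hy₁, L.extend_apply y]
  exact hy₂.symm

end InnerProductSpace

variable {ι R : Type*} [Fintype ι]

def Submodule.IsIsotropic [CommRing R] [StarRing R] (φ : Matrix ι ι R) (z : Submodule R (ι → R)) :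
    Prop :=
  ∀ v ∈ z, ∀ w ∈ z, star v ⬝ᵥ φ *ᵥ w = 0

theorem Matrix.range_mulVecLin_le_ker_iff [CommRing R] (X : Matrix ι ι R) :
    LinearMap.range X.mulVecLin ≤ LinearMap.ker X.mulVecLin ↔ X * X = 0 := by
  classical
  rw [LinearMap.range_le_ker_iff, ← mulVecLin_mul, ← toLin'_apply', LinearEquiv.map_eq_zero_iff]

section SkewAdjoint

variable [CommRing R] [StarRing R] {φ X : Matrix ι ι R}

theorem star_dotProduct_mulVec_mulVec_of_skew (hX : Xᴴ * φ + φ * X = 0) (v w : ι → R) :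
    star v ⬝ᵥ φ *ᵥ (X *ᵥ w) = -(star (X *ᵥ v) ⬝ᵥ φ *ᵥ w) := by
  rw [mulVec_mulVec, eq_neg_of_add_eq_zero_right hX, neg_mulVec, dotProduct_neg,
    ← mulVec_mulVec, dotProduct_mulVec, ← star_mulVec]

theorem isIsotropic_range_of_skew_of_mul_self_eq_zero (hX : Xᴴ * φ + φ * X = 0)
    (hX2 : X * X = 0) : (LinearMap.range X.mulVecLin).IsIsotropic φ := by
  rintro _ ⟨v, rfl⟩ _ ⟨w, rfl⟩
  rw [mulVecLin_apply, mulVecLin_apply, ← neg_eq_zero, ← star_dotProduct_mulVec_mulVec_of_skew hX,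
    mulVec_mulVec w X X, hX2, zero_mulVec, mulVec_zero, dotProduct_zero]

/-- Isotropy applied to `v ∈ z` and `X (φ X v) ∈ z` gives `(X v)⁺ (X v) = 0`. -/
theorem le_ker_of_skew_of_range_le [DecidableEq ι] [PartialOrder R] [StarOrderedRing R]
    [NoZeroDivisors R] (hφ : φ * φ = 1) (hX : Xᴴ * φ + φ * X = 0) {z : Submodule R (ι → R)}
    (hz : z.IsIsotropic φ) (hXz : LinearMap.range X.mulVecLin ≤ z) :
    z ≤ LinearMap.ker X.mulVecLin := by
  intro v hv
  have h := hz v hv _ (hXz ⟨φ *ᵥ (X *ᵥ v), rfl⟩)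
  rw [mulVecLin_apply, star_dotProduct_mulVec_mulVec_of_skew hX, mulVec_mulVec (X *ᵥ v) φ φ, hφ,
    one_mulVec, neg_eq_zero, dotProduct_star_self_eq_zero] at h
  exact h

end SkewAdjoint

section Signature

variable {𝕜 : Type*} [RCLike 𝕜]

variable (ι 𝕜) in
noncomputable def sumArrowEquivEuclideanProd :
    (ι ⊕ ι → 𝕜) ≃ₗ[𝕜] EuclideanSpace 𝕜 ι × EuclideanSpace 𝕜 ι :=
  (LinearEquiv.sumArrowLequivProdArrow ι ι 𝕜 𝕜).trans
    ((WithLp.linearEquiv 2 𝕜 (ι → 𝕜)).symm.prodCongr (WithLp.linearEquiv 2 𝕜 (ι → 𝕜)).symm)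

theorem star_dotProduct_fromBlocks_one_neg_one_mulVec [DecidableEq ι] (v w : ι ⊕ ι → 𝕜) :
    star v ⬝ᵥ fromBlocks 1 0 0 (-1) *ᵥ w =
      ⟪(sumArrowEquivEuclideanProd ι 𝕜 v).1, (sumArrowEquivEuclideanProd ι 𝕜 w).1⟫_𝕜 -
        ⟪(sumArrowEquivEuclideanProd ι 𝕜 v).2, (sumArrowEquivEuclideanProd ι 𝕜 w).2⟫_𝕜 := by
  change _ = ⟪WithLp.toLp 2 (v ∘ Sum.inl), WithLp.toLp 2 (w ∘ Sum.inl)⟫_𝕜 -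
    ⟪WithLp.toLp 2 (v ∘ Sum.inr), WithLp.toLp 2 (w ∘ Sum.inr)⟫_𝕜
  simp only [EuclideanSpace.inner_toLp_toLp, fromBlocks_mulVec, dotProduct_block, one_mulVec,
    neg_mulVec, zero_mulVec, add_zero, zero_add, Sum.elim_comp_inl, Sum.elim_comp_inr,
    dotProduct_neg, sub_eq_add_neg, dotProduct_comm (w ∘ _)]
  rfl

theorem Submodule.IsIsotropic.exists_finrank_eq_card_le [DecidableEq ι]
    {W : Submodule 𝕜 (ι ⊕ ι → 𝕜)} (hW : W.IsIsotropic (fromBlocks 1 0 0 (-1))) :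
    ∃ z : Submodule 𝕜 (ι ⊕ ι → 𝕜), Module.finrank 𝕜 z = Fintype.card ι ∧
      z.IsIsotropic (fromBlocks 1 0 0 (-1)) ∧ W ≤ z := by
  set e := sumArrowEquivEuclideanProd ι 𝕜
  have hnorm : ∀ w ∈ W.map e.toLinearMap, ‖w.1‖ = ‖w.2‖ := by
    rintro _ ⟨v, hv, rfl⟩
    have h := hW v hv v hv
    rw [star_dotProduct_fromBlocks_one_neg_one_mulVec, sub_eq_zero] at h
    change ‖(e v).1‖ = ‖(e v).2‖
    rw [@norm_eq_sqrt_re_inner 𝕜, @norm_eq_sqrt_re_inner 𝕜, h]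
  obtain ⟨U, hU⟩ := (W.map e.toLinearMap).exists_linearIsometry_le_graph hnorm
  refine ⟨U.toLinearMap.graph.comap e.toLinearMap, ?_, ?_, Submodule.map_le_iff_le_comap.mp hU⟩
  · rw [Submodule.comap_equiv_eq_map_symm, LinearEquiv.finrank_map_eq, LinearMap.finrank_graph,
      finrank_euclideanSpace]
  · intro v hv w hw
    rw [star_dotProduct_fromBlocks_one_neg_one_mulVec, sub_eq_zero]
    exact U.inner_fst_eq_inner_snd_of_mem_graph hv hw

end Signature

theorem square_zero_iff_exists_maximal_isotropic (n : ℕ)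
    (X : Matrix (Fin n ⊕ Fin n) (Fin n ⊕ Fin n) ℂ)
    (hX : Xᴴ * Matrix.fromBlocks 1 0 0 (-1) + Matrix.fromBlocks 1 0 0 (-1) * X = 0) :
    X * X = 0 ↔
      ∃ z : Submodule ℂ (Fin n ⊕ Fin n → ℂ),
        Module.finrank ℂ z = n ∧
        (∀ v ∈ z, ∀ w ∈ z,
          star v ⬝ᵥ (Matrix.fromBlocks (1 : Matrix (Fin n) (Fin n) ℂ) 0 0 (-1)).mulVec w = 0) ∧
        LinearMap.range X.mulVecLin ≤ z ∧ z ≤ LinearMap.ker X.mulVecLin := by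
  refine ⟨fun hX2 => ?_, fun ⟨z, _, _, hXz, hzX⟩ => X.range_mulVecLin_le_ker_iff.mp (hXz.trans hzX)⟩
  obtain ⟨z, hdim, hz, hXz⟩ :=
    (isIsotropic_range_of_skew_of_mul_self_eq_zero hX hX2).exists_finrank_eq_card_le
  have hφ : (fromBlocks 1 0 0 (-1) : Matrix (Fin n ⊕ Fin n) (Fin n ⊕ Fin n) ℂ) *
      fromBlocks 1 0 0 (-1) = 1 := by
    simp [fromBlocks_multiply]
  open ComplexOrder in
  exact ⟨z, by rwa [Fintype.card_fin] at hdim, hz, hXz, le_ker_of_skew_of_range_le hφ hX hz hXz⟩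
end

section
/- If vectors v_k = (η_k, ξ_k) ∈ ℂ^n ⊕ ℂ^n, k = 1,…,n, are linearly independent and span an isotropic subspace (so η_k⁺η_l = ξ_k⁺ξ_l for all k,l), then ξ_1, …, ξ_n form a basis of ℂ^n and there exists Z ∈ U(n) with η_k = Zξ_k for all k. -/
open Matrix

theorem isotropic_frame_gives_unitary (n : ℕ)
    (η ξ : Fin n → (Fin n → ℂ))
    (hli : LinearIndependent ℂ (fun k => Sum.elim (η k) (ξ k) : Fin n → (Fin n ⊕ Fin n → ℂ)))
    (hiso : ∀ k l, star (η k) ⬝ᵥ η l = star (ξ k) ⬝ᵥ ξ l) :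
    (LinearIndependent ℂ ξ ∧ Submodule.span ℂ (Set.range ξ) = ⊤) ∧
      ∃ Z ∈ Matrix.unitaryGroup (Fin n) ℂ, ∀ k, η k = Z.mulVec (ξ k) := by
  set B : Matrix (Fin n) (Fin n) ℂ := Matrix.of ξ with hB
  set A : Matrix (Fin n) (Fin n) ℂ := Matrix.of η with hA
  have hAB : Aᵀᴴ * Aᵀ = Bᵀᴴ * Bᵀ := by
    ext k l
    simpa [Matrix.mul_apply, Matrix.conjTranspose_apply, dotProduct, hA, hB] using hiso k l
  have hmv : ∀ (v : Fin n → Fin n → ℂ) (g : Fin n → ℂ),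
      (Matrix.of v)ᵀ.mulVec g = ∑ k, g k • v k := by
    intro v g
    funext i
    simp [Matrix.mulVec, dotProduct, mul_comm]
  have key : ∀ g : Fin n → ℂ, ∑ k, g k • ξ k = 0 → ∑ k, g k • η k = 0 := by
    intro g hg
    rw [← hmv] at hg ⊢
    have hq : ∀ M : Matrix (Fin n) (Fin n) ℂ,
        star (M.mulVec g) ⬝ᵥ M.mulVec g = star g ᵥ* (Mᴴ * M) ⬝ᵥ g := by
      intro M
      rw [Matrix.star_mulVec, Matrix.dotProduct_mulVec, Matrix.vecMul_vecMul]
    have hzero : star (Aᵀ.mulVec g) ⬝ᵥ Aᵀ.mulVec g = 0 := by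
      rw [hq, hAB, ← hq, hg]
      simp
    open scoped ComplexOrder in
    exact dotProduct_star_self_eq_zero.mp hzero
  have hliξ : LinearIndependent ℂ ξ := by
    rw [Fintype.linearIndependent_iff]
    intro g hg
    have hη := key g hg
    have hsum : ∑ k, g k • (Sum.elim (η k) (ξ k) : Fin n ⊕ Fin n → ℂ) = 0 := by
      funext x
      cases x with
      | inl i => simpa using congrFun hη i
      | inr i => simpa using congrFun hg i
    exact Fintype.linearIndependent_iff.mp hli g hsum
  have hcard : Fintype.card (Fin n) = Module.finrank ℂ (Fin n → ℂ) := by simp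
  refine ⟨⟨hliξ, hliξ.span_eq_top_of_card_eq_finrank' hcard⟩, ?_⟩
  have hBunit : IsUnit Bᵀ :=
    (Matrix.isUnit_transpose _).mpr (Matrix.linearIndependent_rows_iff_isUnit.mp hliξ)
  have hBdet : IsUnit Bᵀ.det := (Matrix.isUnit_iff_isUnit_det _).mp hBunit
  have hBHunit : IsUnit Bᵀᴴ := by
    have := hBunit.star
    rwa [Matrix.star_eq_conjTranspose] at this
  have hBHdet : IsUnit Bᵀᴴ.det := (Matrix.isUnit_iff_isUnit_det _).mp hBHunit
  refine ⟨Aᵀ * Bᵀ⁻¹, ?_, ?_⟩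
  · rw [Matrix.mem_unitaryGroup_iff']
    calc star (Aᵀ * Bᵀ⁻¹) * (Aᵀ * Bᵀ⁻¹)
        = Bᵀ⁻¹ᴴ * (Aᵀᴴ * Aᵀ) * Bᵀ⁻¹ := by
          simp only [Matrix.star_eq_conjTranspose, Matrix.conjTranspose_mul, Matrix.mul_assoc]
      _ = Bᵀᴴ⁻¹ * (Bᵀᴴ * Bᵀ) * Bᵀ⁻¹ := by rw [Matrix.conjTranspose_nonsing_inv, hAB]
      _ = 1 := by
          rw [← Matrix.mul_assoc, Matrix.nonsing_inv_mul _ hBHdet,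
            Matrix.one_mul, Matrix.mul_nonsing_inv _ hBdet]
  · intro k
    have hξ : ξ k = Bᵀ.mulVec (Pi.single k 1) := by
      funext i
      simp [Matrix.mulVec_single, hB]
    rw [hξ, Matrix.mulVec_mulVec, Matrix.mul_assoc, Matrix.nonsing_inv_mul _ hBdet,
      Matrix.mul_one]
    funext i
    simp [Matrix.mulVec_single, hA]
end

section
/- For g = (A B; C D) ∈ U(n,n) (with φ_d = diag(E,−E)) and Z ∈ U(n), the matrix CZ + D is invertible and (AZ + B)(CZ + D)^{-1} ∈ U(n), i.e. the action σ_g(Z) = (AZ+B)(CZ+D)^{-1} is well-defined on U(n). -/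
/-!
With `X = [Z; 1]` and `φ = diag(1, -1)` one has `Xᴴ φ X = Zᴴ Z - 1 = 0`. Since `g` preserves `φ`,
`g X = [A Z + B; C Z + D]` is `φ`-null as well, i.e.
`(A Z + B)ᴴ (A Z + B) = (C Z + D)ᴴ (C Z + D)`. So `C Z + D` and `A Z + B` have the same kernel,
which is therefore contained in the kernel of `g X`; that kernel is trivial, since `g` is
invertible (`g⁻¹ = φ gᴴ φ`) and `X` has an identity block. Finally `W = (A Z + B)(C Z + D)⁻¹`
satisfies `Wᴴ W = 1` by the same identity.
-/

open Matrix

namespace Matrix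

variable {m n p R : Type*} [Fintype m] [Fintype n] [DecidableEq m] [DecidableEq n]

section Ring

variable [Ring R]

lemma fromBlocks_one_zero_zero_neg_one_mul_self :
    (fromBlocks 1 0 0 (-1) : Matrix (m ⊕ n) (m ⊕ n) R) * fromBlocks 1 0 0 (-1) = 1 := by
  simp [fromBlocks_multiply]

variable [StarRing R]

lemma conjTranspose_fromRows_mul_fromBlocks_mul_fromRows (P : Matrix m p R) (Q : Matrix n p R) :
    (fromRows P Q)ᴴ * (fromBlocks 1 0 0 (-1) : Matrix (m ⊕ n) (m ⊕ n) R) * fromRows P Q =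
      Pᴴ * P - Qᴴ * Q := by
  rw [conjTranspose_fromRows_eq_fromCols_conjTranspose, fromCols_mul_fromBlocks,
    fromCols_mul_fromRows]
  simp [sub_eq_add_neg]

lemma conjTranspose_mul_self_mul_add_eq {A : Matrix m m R} {B : Matrix m n R}
    {C : Matrix n m R} {D : Matrix n n R}
    (hg : (fromBlocks A B C D)ᴴ * fromBlocks 1 0 0 (-1) * fromBlocks A B C D =
      fromBlocks 1 0 0 (-1))
    {Z : Matrix m n R} (hZ : Zᴴ * Z = 1) :
    (A * Z + B)ᴴ * (A * Z + B) = (C * Z + D)ᴴ * (C * Z + D) := by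
  set g := fromBlocks A B C D
  set X : Matrix (m ⊕ n) n R := fromRows Z 1
  have hgX : g * X = fromRows (A * Z + B) (C * Z + D) := by
    simp only [g, X, fromBlocks_mul_fromRows, Matrix.mul_one]
  rw [← sub_eq_zero]
  calc (A * Z + B)ᴴ * (A * Z + B) - (C * Z + D)ᴴ * (C * Z + D)
      = (g * X)ᴴ * (fromBlocks 1 0 0 (-1) : Matrix (m ⊕ n) (m ⊕ n) R) * (g * X) := by
        rw [hgX, conjTranspose_fromRows_mul_fromBlocks_mul_fromRows]
    _ = Xᴴ * (gᴴ * (fromBlocks 1 0 0 (-1) : Matrix (m ⊕ n) (m ⊕ n) R) * g) * X := by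
        simp only [conjTranspose_mul, Matrix.mul_assoc]
    _ = 0 := by
        rw [hg, conjTranspose_fromRows_mul_fromBlocks_mul_fromRows, hZ, conjTranspose_one,
          Matrix.one_mul, sub_self]

end Ring

lemma isUnit_of_conjTranspose_mul_mul_eq [CommRing R] [StarRing R] {g J : Matrix n n R}
    (hJ : J * J = 1) (hg : gᴴ * J * g = J) : IsUnit g :=
  (isUnit_iff_isUnit_det g).mpr <| isUnit_det_of_left_inverse (B := J * gᴴ * J) <| by
    rw [Matrix.mul_assoc, Matrix.mul_assoc, ← Matrix.mul_assoc gᴴ, hg, hJ]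

omit [DecidableEq m] in
lemma conjTranspose_mul_mul_inv_eq_one [CommRing R] [StarRing R] {M : Matrix n n R}
    {N : Matrix m n R} (hM : IsUnit M) (h : Nᴴ * N = Mᴴ * M) :
    (N * M⁻¹)ᴴ * (N * M⁻¹) = 1 := by
  calc (N * M⁻¹)ᴴ * (N * M⁻¹) = M⁻¹ᴴ * (Nᴴ * N) * M⁻¹ := by
        simp only [conjTranspose_mul, Matrix.mul_assoc]
    _ = (M * M⁻¹)ᴴ * (M * M⁻¹) := by
        rw [h]; simp only [conjTranspose_mul, Matrix.mul_assoc]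
    _ = 1 := by
        rw [mul_nonsing_inv _ ((isUnit_iff_isUnit_det M).mp hM), conjTranspose_one,
          Matrix.one_mul]

lemma isUnit_mul_add_of_conjTranspose_mul_mul_eq [Field R] [PartialOrder R] [StarRing R]
    [StarOrderedRing R] {A : Matrix m m R} {B : Matrix m n R} {C : Matrix n m R}
    {D : Matrix n n R}
    (hg : (fromBlocks A B C D)ᴴ * fromBlocks 1 0 0 (-1) * fromBlocks A B C D =
      fromBlocks 1 0 0 (-1))
    {Z : Matrix m n R} (hZ : Zᴴ * Z = 1) :
    IsUnit (C * Z + D) := by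
  rw [isUnit_iff_isUnit_det, isUnit_iff_ne_zero, Ne, ← exists_mulVec_eq_zero_iff]
  rintro ⟨v, hv, hMv⟩
  have hNv : (A * Z + B) *ᵥ v = 0 := by
    rwa [← conjTranspose_mul_self_mulVec_eq_zero, conjTranspose_mul_self_mul_add_eq hg hZ,
      conjTranspose_mul_self_mulVec_eq_zero]
  have hgXv : fromBlocks A B C D *ᵥ (fromRows Z 1 *ᵥ v) = fromBlocks A B C D *ᵥ 0 := by
    rw [mulVec_mulVec, fromBlocks_mul_fromRows, Matrix.mul_one, Matrix.mul_one, fromRows_mulVec,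
      hNv, hMv, mulVec_zero]
    ext (_ | _) <;> rfl
  have hXv := mulVec_injective_iff_isUnit.mpr
    (isUnit_of_conjTranspose_mul_mul_eq fromBlocks_one_zero_zero_neg_one_mul_self hg) hgXv
  exact hv (funext fun i => by simpa using congr_fun hXv (Sum.inr i))

end Matrix

theorem unn_action_on_unitary_welldefined (n : ℕ)
    (A B C D : Matrix (Fin n) (Fin n) ℂ)
    (hg : (Matrix.fromBlocks A B C D)ᴴ * Matrix.fromBlocks 1 0 0 (-1) *
        Matrix.fromBlocks A B C D = Matrix.fromBlocks 1 0 0 (-1))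
    (Z : Matrix (Fin n) (Fin n) ℂ) (hZ : Z ∈ Matrix.unitaryGroup (Fin n) ℂ) :
    IsUnit (C * Z + D) ∧
      (A * Z + B) * (C * Z + D)⁻¹ ∈ Matrix.unitaryGroup (Fin n) ℂ := by
  have hZZ : Zᴴ * Z = 1 := mem_unitaryGroup_iff'.mp hZ
  have hunit := open ComplexOrder in isUnit_mul_add_of_conjTranspose_mul_mul_eq hg hZZ
  exact ⟨hunit, mem_unitaryGroup_iff'.mpr
    (conjTranspose_mul_mul_inv_eq_one hunit (conjTranspose_mul_self_mul_add_eq hg hZZ))⟩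
end

section
/- For (υ,ζ) ∈ ℂ^n × ℂ^n with ζ ≠ 0 and i(ζ⁺υ − υ⁺ζ) = 0 (so ζ⁺υ is real), the matrix Y = (1/(ζ⁺ζ))[ζυ⁺ + υζ⁺ − ½(υ⁺ζ + ζ⁺υ)E] is Hermitian and satisfies Yζ = (1/(ζ⁺ζ))[ζ(υ⁺ζ) + υ(ζ⁺ζ) − (ζ⁺υ)ζ] = υ. -/
open Matrix

theorem mulVec_vecMulVec' {n : ℕ} (a b c : Fin n → ℂ) :
    (Matrix.vecMulVec a b).mulVec c = (b ⬝ᵥ c) • a := by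
  funext i
  simp only [Matrix.mulVec, Matrix.vecMulVec_apply, dotProduct, Pi.smul_apply, smul_eq_mul,
    Finset.sum_mul]
  exact Finset.sum_congr rfl fun j _ => by ring

theorem vecMulVec_conjTranspose' {n : ℕ} (a b : Fin n → ℂ) :
    (Matrix.vecMulVec a b)ᴴ = Matrix.vecMulVec (star b) (star a) := by
  ext i j
  simp [Matrix.conjTranspose_apply, Matrix.vecMulVec_apply, mul_comm]

/-- Section of the generalized Kustaanheimo-Stiefel map: for a null twistor
`(υ, ζ)` with `ζ ≠ 0`, the matrix
`Y = (1/(ζ⁺ζ))[ζυ⁺ + υζ⁺ - ½(υ⁺ζ + ζ⁺υ)E]` is Hermitian and satisfies `Yζ = υ`. -/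
theorem KS_section (n : ℕ) (υ ζ : Fin n → ℂ) (hζ : ζ ≠ 0)
    (hnull : star ζ ⬝ᵥ υ = star υ ⬝ᵥ ζ) :
    ((star ζ ⬝ᵥ ζ)⁻¹ •
        (Matrix.vecMulVec ζ (star υ) + Matrix.vecMulVec υ (star ζ) -
          ((star υ ⬝ᵥ ζ + star ζ ⬝ᵥ υ) / 2) • (1 : Matrix (Fin n) (Fin n) ℂ)))ᴴ =
      (star ζ ⬝ᵥ ζ)⁻¹ •
        (Matrix.vecMulVec ζ (star υ) + Matrix.vecMulVec υ (star ζ) -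
          ((star υ ⬝ᵥ ζ + star ζ ⬝ᵥ υ) / 2) • (1 : Matrix (Fin n) (Fin n) ℂ)) ∧
    ((star ζ ⬝ᵥ ζ)⁻¹ •
        (Matrix.vecMulVec ζ (star υ) + Matrix.vecMulVec υ (star ζ) -
          ((star υ ⬝ᵥ ζ + star ζ ⬝ᵥ υ) / 2) • (1 : Matrix (Fin n) (Fin n) ℂ))).mulVec ζ
      = υ := by
  have hs : star (star ζ ⬝ᵥ ζ) = star ζ ⬝ᵥ ζ := by
    rw [← star_dotProduct]
  have ht : star (star υ ⬝ᵥ ζ) = star ζ ⬝ᵥ υ := by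
    rw [← star_dotProduct]
  have ht' : star (star ζ ⬝ᵥ υ) = star υ ⬝ᵥ ζ := by
    rw [← star_dotProduct]
  have hsne : (star ζ ⬝ᵥ ζ) ≠ 0 := by
    intro h
    apply hζ
    funext i
    have := congrArg Complex.re h
    have hsum : ∑ j, Complex.normSq (ζ j) = 0 := by
      simpa [dotProduct, Complex.normSq_apply, Complex.mul_re, mul_comm] using this
    have : Complex.normSq (ζ i) = 0 :=
      (Finset.sum_eq_zero_iff_of_nonneg (fun j _ => Complex.normSq_nonneg _)).mp hsum i
        (Finset.mem_univ i)
    exact Complex.normSq_eq_zero.mp this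
  have h2 : star ((star υ ⬝ᵥ ζ + star ζ ⬝ᵥ υ) / 2) = (star υ ⬝ᵥ ζ + star ζ ⬝ᵥ υ) / 2 := by
    rw [star_div₀, star_add, ht, ht']
    norm_num
    ring
  constructor
  · rw [Matrix.conjTranspose_smul, Matrix.conjTranspose_sub, Matrix.conjTranspose_add,
      vecMulVec_conjTranspose', vecMulVec_conjTranspose', Matrix.conjTranspose_smul,
      Matrix.conjTranspose_one, star_inv₀, hs, h2, star_star, star_star]
    rw [add_comm (Matrix.vecMulVec υ (star ζ))]
  · rw [Matrix.smul_mulVec, Matrix.sub_mulVec, Matrix.add_mulVec,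
      mulVec_vecMulVec', mulVec_vecMulVec', Matrix.smul_mulVec, Matrix.one_mulVec]
    rw [hnull]
    funext i
    simp only [Pi.smul_apply, Pi.sub_apply, Pi.add_apply, smul_eq_mul]
    field_simp
    ring
end
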